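/- arXiv:1302.7022 — 5 statements merged into one kernel-verified Lean document; each statement's English description precedes it below -/
import Mathlib

section
/- Let $(X,\mu)$ be a measure space with finite nonzero measure $\mu$, let $q \in (1,\infty)$, let $\varphi : X \to (0,\infty)$ be measurable, and set $\lambda = 1/(q-1)$. Then, with all integrals taken in $[0,\infty]$, $$\inf\Big\{ \int_X \varphi\,\alpha^q \, d\mu \;:\; \alpha : X \to [0,\infty] \text{ measurable},\ \int_X \alpha\, d\mu = 1 \Big\} \;=\; \Big( \int_X \varphi^{-\lambda}\, d\mu \Big)^{-1/\lambda},$$ where the right-hand side is interpreted as $0$ when $\int_X \varphi^{-\lambda} d\mu = \infty$. -/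
/-!
Write `w = ofReal ∘ φ`, so that `-1/λ = 1 - q`. Hölder's inequality with exponents `q` and
`q/(q-1)`, applied to `α = (w^(1/q) α) · w^(-1/q)`, shows that `∫ w α^q ≥ (∫ w^(-λ))^(1-q)`
whenever `∫ α = 1`. Conversely, any `h ≤ w^(-λ)` satisfies `w h^q ≤ h` pointwise, so
`α = h / ∫ h` gives `∫ w α^q ≤ (∫ h)^(1-q)`. Taking the truncations `h = min (w^(-λ)) n`, which
have finite positive integrals increasing to `∫ w^(-λ)`, matches the lower bound in the limit;
this also covers the case `∫ w^(-λ) = ∞`, where no minimiser exists.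
-/

open MeasureTheory ENNReal Filter Topology

lemma ENNReal.mul_rpow_le_of_le_rpow_neg_inv {q : ℝ} {w h : ℝ≥0∞} (hq : 1 < q) (hw0 : w ≠ 0)
    (hwtop : w ≠ ⊤) (hh : h ≤ w ^ (-(q - 1)⁻¹)) : w * h ^ q ≤ h := by
  have hsplit : h ^ q = h ^ (q - 1) * h := by
    conv_lhs =>
      rw [← sub_add_cancel q 1, rpow_add_of_nonneg _ _ (by linarith) zero_le_one, rpow_one]
  calc w * h ^ q = w * h ^ (q - 1) * h := by rw [hsplit, mul_assoc]
    _ ≤ w * (w ^ (-(q - 1)⁻¹)) ^ (q - 1) * h := by gcongr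
    _ = h := by
      rw [← rpow_mul, neg_mul, inv_mul_cancel₀ (by linarith), rpow_neg_one,
        ENNReal.mul_inv_cancel hw0 hwtop, one_mul]

section

variable {X : Type*} [MeasurableSpace X] {μ : Measure X} {w : X → ℝ≥0∞} {q : ℝ}

theorem lintegral_le_weighted_holder (hq : 1 < q) (hw0 : ∀ x, w x ≠ 0) (hwtop : ∀ x, w x ≠ ⊤)
    (hw : AEMeasurable w μ) {α : X → ℝ≥0∞} (hα : AEMeasurable α μ) :
    ∫⁻ x, α x ∂μ ≤ (∫⁻ x, w x * α x ^ q ∂μ) ^ (1 / q) *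
      (∫⁻ x, w x ^ (-(q - 1)⁻¹) ∂μ) ^ (1 / q.conjExponent) := by
  have hq0 : 0 < q := by linarith
  have hα_eq : α = (fun x => w x ^ (1 / q) * α x) * fun x => w x ^ (-(1 / q)) := by
    ext x
    rw [Pi.mul_apply, mul_right_comm, ← rpow_add _ _ (hw0 x) (hwtop x), add_neg_cancel, rpow_zero,
      one_mul]
  have hfirst : ∀ x, (w x ^ (1 / q) * α x) ^ q = w x * α x ^ q := fun x => by
    rw [mul_rpow_of_nonneg _ _ hq0.le, ← rpow_mul, one_div_mul_cancel hq0.ne', rpow_one]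
  have hsecond : ∀ x, (w x ^ (-(1 / q))) ^ q.conjExponent = w x ^ (-(q - 1)⁻¹) := fun x => by
    rw [← rpow_mul, Real.conjExponent]
    congr 1
    field_simp
  calc ∫⁻ x, α x ∂μ
      = ∫⁻ x, ((fun x => w x ^ (1 / q) * α x) * fun x => w x ^ (-(1 / q))) x ∂μ := by
        rw [← hα_eq]
    _ ≤ _ := ENNReal.lintegral_mul_le_Lp_mul_Lq μ (.conjExponent hq)
        ((hw.pow_const _).mul hα) (hw.pow_const _)
    _ = _ := by simp only [hfirst, hsecond]

theorem rpow_one_sub_le_lintegral_mul_rpow (hq : 1 < q) (hw0 : ∀ x, w x ≠ 0)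
    (hwtop : ∀ x, w x ≠ ⊤) (hw : AEMeasurable w μ) {α : X → ℝ≥0∞} (hα : AEMeasurable α μ)
    (hα1 : ∫⁻ x, α x ∂μ = 1) :
    (∫⁻ x, w x ^ (-(q - 1)⁻¹) ∂μ) ^ (1 - q) ≤ ∫⁻ x, w x * α x ^ q ∂μ := by
  set I := ∫⁻ x, w x ^ (-(q - 1)⁻¹) ∂μ
  set A := ∫⁻ x, w x * α x ^ q ∂μ
  rcases eq_or_ne I ⊤ with hI | hI
  · rw [hI, top_rpow_of_neg (by linarith)]
    exact zero_le
  have hq0 : 0 < q := by linarith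
  have hholder : 1 ≤ A ^ (1 / q) * I ^ (1 / q.conjExponent) :=
    hα1 ▸ lintegral_le_weighted_holder hq hw0 hwtop hw hα
  have hAI : 1 ≤ A * I ^ (q - 1) := by
    have hexp : 1 / q.conjExponent * q = q - 1 := by
      rw [Real.conjExponent]
      field_simp
    have := rpow_le_rpow hholder hq0.le
    rwa [one_rpow, mul_rpow_of_nonneg _ _ hq0.le, ← rpow_mul, ← rpow_mul,
      one_div_mul_cancel hq0.ne', rpow_one, hexp] at this
  have hI0 : I ^ (q - 1) ≠ 0 := by
    intro h
    simp [h] at hAI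
  rw [← neg_sub, rpow_neg, inv_le_iff_le_mul (fun _ => hI0)
    (fun h => absurd h (rpow_ne_top_of_nonneg (by linarith) hI)), mul_comm]
  exact hAI

theorem iInf_lintegral_mul_rpow_le (hq : 1 < q) (hw0 : ∀ x, w x ≠ 0) (hwtop : ∀ x, w x ≠ ⊤)
    {h : X → ℝ≥0∞} (hh : Measurable h) (hhw : ∀ x, h x ≤ w x ^ (-(q - 1)⁻¹))
    (h0 : ∫⁻ x, h x ∂μ ≠ 0) (htop : ∫⁻ x, h x ∂μ ≠ ⊤) :
    (⨅ (α : X → ℝ≥0∞) (_ : Measurable α) (_ : ∫⁻ x, α x ∂μ = 1), ∫⁻ x, w x * α x ^ q ∂μ)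
      ≤ (∫⁻ x, h x ∂μ) ^ (1 - q) := by
  set c := ∫⁻ x, h x ∂μ
  have hq0 : 0 < q := by linarith
  have hα1 : ∫⁻ x, c⁻¹ * h x ∂μ = 1 := by
    rw [lintegral_const_mul _ hh, ENNReal.inv_mul_cancel h0 htop]
  refine iInf₂_le_of_le (fun x => c⁻¹ * h x) (hh.const_mul _) (iInf_le_of_le hα1 ?_)
  calc ∫⁻ x, w x * (c⁻¹ * h x) ^ q ∂μ = ∫⁻ x, c⁻¹ ^ q * (w x * h x ^ q) ∂μ := by
        congr 1 with x
        rw [mul_rpow_of_nonneg _ _ hq0.le, mul_left_comm]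
    _ = c⁻¹ ^ q * ∫⁻ x, w x * h x ^ q ∂μ :=
        lintegral_const_mul' _ _ (rpow_ne_top_of_nonneg hq0.le (ENNReal.inv_ne_top.2 h0))
    _ ≤ c⁻¹ ^ q * c := by
        gcongr
        exact lintegral_mono fun x =>
          ENNReal.mul_rpow_le_of_le_rpow_neg_inv hq (hw0 x) (hwtop x) (hhw x)
    _ = c ^ (1 - q) := by
        rw [inv_rpow, ← rpow_neg, sub_eq_neg_add, rpow_add _ _ h0 htop, rpow_one]

theorem tendsto_lintegral_min_natCast {g : X → ℝ≥0∞} (hg : AEMeasurable g μ) :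
    Tendsto (fun n : ℕ => ∫⁻ x, min (g x) n ∂μ) atTop (𝓝 (∫⁻ x, g x ∂μ)) := by
  refine lintegral_tendsto_of_tendsto_of_monotone (fun n => hg.min aemeasurable_const)
    (ae_of_all _ fun x m n hmn => min_le_min le_rfl (Nat.mono_cast hmn)) (ae_of_all _ fun x => ?_)
  simpa using tendsto_const_nhds.min tendsto_nat_nhds_top

theorem lintegral_min_natCast_ne_top [IsFiniteMeasure μ] (g : X → ℝ≥0∞) (n : ℕ) :
    ∫⁻ x, min (g x) n ∂μ ≠ ⊤ :=
  ne_top_of_le_ne_top (by simpa using mul_ne_top (natCast_ne_top n) (measure_ne_top μ _))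
    (lintegral_mono fun x => min_le_right _ _)

theorem lintegral_ne_zero_of_forall_ne_zero [NeZero μ] {f : X → ℝ≥0∞} (hf : AEMeasurable f μ)
    (hf0 : ∀ x, f x ≠ 0) : ∫⁻ x, f x ∂μ ≠ 0 := by
  intro h
  have : (ae μ).NeBot := ae_neBot.2 (NeZero.ne μ)
  obtain ⟨x, hx⟩ := ((lintegral_eq_zero_iff' hf).1 h).exists
  exact hf0 x hx

end

/-- For a measure space `(X, μ)` with finite nonzero measure, `q ∈ (1,∞)`,
a measurable `φ : X → (0,∞)` and `λ = 1/(q-1)`, the infimum of `∫ φ α^q dμ` over all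
measurable `α : X → [0,∞]` with `∫ α dμ = 1` equals `(∫ φ^{-λ} dμ)^{-1/λ}`
(interpreted as `0` when the latter integral is infinite, which is how `ENNReal.rpow`
with a negative exponent behaves). -/
theorem stmt0 {X : Type*} [MeasurableSpace X] (μ : Measure X)
    (hμfin : μ Set.univ ≠ ⊤) (hμpos : μ Set.univ ≠ 0)
    (q : ℝ) (hq : 1 < q)
    (φ : X → ℝ) (hφm : Measurable φ) (hφpos : ∀ x, 0 < φ x)
    (lam : ℝ) (hlam : lam = 1 / (q - 1)) :
    (⨅ (α : X → ℝ≥0∞) (_ : Measurable α) (_ : ∫⁻ x, α x ∂μ = 1),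
        ∫⁻ x, ENNReal.ofReal (φ x) * α x ^ q ∂μ)
      = (∫⁻ x, ENNReal.ofReal (φ x) ^ (-lam) ∂μ) ^ (-1 / lam) := by
  have : IsFiniteMeasure μ := ⟨hμfin.lt_top⟩
  have : NeZero μ := ⟨Measure.measure_univ_ne_zero.1 hμpos⟩
  have hexp : -1 / lam = 1 - q := by rw [hlam]; field_simp; ring
  rw [hexp, hlam, one_div]
  set w := fun x => ENNReal.ofReal (φ x)
  have hw : Measurable w := hφm.ennreal_ofReal
  have hw0 : ∀ x, w x ≠ 0 := fun x => (ofReal_pos.2 (hφpos x)).ne'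
  have hwtop : ∀ x, w x ≠ ⊤ := fun _ => ofReal_ne_top
  set g := fun x => w x ^ (-(q - 1)⁻¹)
  have hg : Measurable g := hw.pow_const _
  have hg0 : ∀ x, g x ≠ 0 := fun x => (rpow_pos (pos_iff_ne_zero.2 (hw0 x)) (hwtop x)).ne'
  refine le_antisymm ?_ (le_iInf₂ fun α hα => le_iInf fun hα1 =>
    rpow_one_sub_le_lintegral_mul_rpow hq hw0 hwtop hw.aemeasurable hα.aemeasurable hα1)
  refine ge_of_tendsto ((continuous_rpow_const.tendsto _).comp
    (tendsto_lintegral_min_natCast hg.aemeasurable)) (eventually_atTop.2 ⟨1, fun n hn => ?_⟩)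
  refine iInf_lintegral_mul_rpow_le hq hw0 hwtop (hg.min measurable_const)
    (fun x => min_le_left _ _) (lintegral_ne_zero_of_forall_ne_zero
      (hg.min measurable_const).aemeasurable fun x => ?_) (lintegral_min_natCast_ne_top g n)
  exact (lt_min (pos_iff_ne_zero.2 (hg0 x)) (by exact_mod_cast hn)).ne'
end

section
/- Let $p > 1$, $z_0 \in \mathbb{C}$, $0 < r_1 < r_2$, and let $Q : \mathbb{C} \to (0,\infty)$ be measurable such that for almost every $r \in (r_1,r_2)$ one has $0 < \|Q\|_{1/(p-1)}(z_0,r) < \infty$. Then $$\inf\Big\{ \int_{R(z_0,r_1,r_2)} \frac{\varrho(z)^p}{Q(z)}\, dm(z) \;:\; \varrho : \mathbb{C} \to [0,\infty] \text{ measurable},\ \int_0^{2\pi} \varrho(z_0 + re^{i\theta})\, r\, d\theta \ge 1 \text{ for a.e. } r \in (r_1,r_2) \Big\} = \int_{r_1}^{r_2} \frac{dr}{\|Q\|_{1/(p-1)}(z_0,r)}.$$ -/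
open MeasureTheory ENNReal Real

/-- The arclength integral `∫_{C(z₀,r)} Q^e |dz| = ∫_0^{2π} Q(z₀ + r e^{iθ})^e · r dθ`
of the `e`-th power of a positive function `Q` over the circle of radius `r`
centered at `z₀`, with values in `[0,∞]`. -/
noncomputable def circlePowInt (Q : ℂ → ℝ) (e : ℝ) (z0 : ℂ) (r : ℝ) : ℝ≥0∞ :=
  ∫⁻ θ in Set.Ioc (0 : ℝ) (2 * π),
    ENNReal.ofReal (Q (z0 + (r : ℂ) * Complex.exp ((θ : ℂ) * Complex.I))) ^ e
      * ENNReal.ofReal r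

/-- `‖Q‖_{1/(p-1)}(z₀,r) = (∫_{C(z₀,r)} Q^{1/(p-1)} |dz|)^{p-1}`. -/
noncomputable def normQ (Q : ℂ → ℝ) (p : ℝ) (z0 : ℂ) (r : ℝ) : ℝ≥0∞ :=
  circlePowInt Q (1 / (p - 1)) z0 r ^ (p - 1)

/-- The annulus `R(z₀,r₁,r₂) = {z ∈ ℂ : r₁ < |z - z₀| < r₂}`. -/
def annulus (z0 : ℂ) (r1 r2 : ℝ) : Set ℂ :=
  {z : ℂ | r1 < ‖z - z0‖ ∧ ‖z - z0‖ < r2}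

/-! In polar coordinates about `z₀` both sides become integrals over `r ∈ (r₁, r₂)` of
quantities living on the circle of radius `r`, so they can be compared circle by circle.
On a circle, Hölder's inequality with exponents `p` and `p/(p-1)`, applied to
`ϱ = (ϱ Q^{-1/p}) · Q^{1/p}`, gives `∫ ϱ^p/Q ≥ ‖Q‖_{1/(p-1)}⁻¹` as soon as `∫ ϱ ≥ 1`, and
equality holds for `ϱ₀ = Q^{1/(p-1)} / ∫ Q^{1/(p-1)}`, the case of equality in Hölder. -/

open Set

theorem Function.Periodic.setLIntegral_Ioc_add_eq {f : ℝ → ℝ≥0∞} {T : ℝ}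
    (hf : Function.Periodic f T) (hT : 0 < T) (t s : ℝ) :
    ∫⁻ x in Ioc t (t + T), f x = ∫⁻ x in Ioc s (s + T), f x := by
  have : VAddInvariantMeasure (AddSubgroup.zmultiples T) ℝ volume :=
    ⟨fun c s _ => measure_preimage_add _ _ _⟩
  exact IsAddFundamentalDomain.setLIntegral_eq (isAddFundamentalDomain_Ioc hT t)
    (isAddFundamentalDomain_Ioc hT s) f hf.map_vadd_zmultiples

theorem measurableSet_annulus (z0 : ℂ) (r1 r2 : ℝ) : MeasurableSet (annulus z0 r1 r2) :=
  have h : Continuous fun z : ℂ => ‖z - z0‖ := by fun_prop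
  ((isOpen_lt continuous_const h).inter (isOpen_lt h continuous_const)).measurableSet

theorem circleMap_mem_annulus_iff {z0 : ℂ} {r1 r2 r : ℝ} (hr : 0 ≤ r) (θ : ℝ) :
    circleMap z0 r θ ∈ annulus z0 r1 r2 ↔ r ∈ Ioo r1 r2 := by
  simp [annulus, circleMap_sub_center, norm_circleMap_zero, abs_of_nonneg hr]

theorem add_polarCoord_symm (z0 : ℂ) (q : ℝ × ℝ) :
    z0 + Complex.polarCoord.symm q = circleMap z0 q.1 q.2 := by
  simp [circleMap, Complex.exp_mul_I, ← Complex.ofReal_cos, ← Complex.ofReal_sin]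

theorem measurable_circleMap_uncurry (z0 : ℂ) :
    Measurable fun q : ℝ × ℝ => circleMap z0 q.1 q.2 := by
  unfold circleMap; fun_prop

theorem lintegral_annulus_eq_lintegral_circleMap {z0 : ℂ} {r1 r2 : ℝ} (hr1 : 0 ≤ r1)
    {g : ℂ → ℝ≥0∞} (hg : Measurable g) :
    ∫⁻ z in annulus z0 r1 r2, g z
      = ∫⁻ r in Ioo r1 r2, ∫⁻ θ in Ioc 0 (2 * π), g (circleMap z0 r θ) * ENNReal.ofReal r := by
  have hA := measurableSet_annulus z0 r1 r2
  have hF : Measurable fun q : ℝ × ℝ => ENNReal.ofReal q.1 * g (circleMap z0 q.1 q.2) :=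
    measurable_fst.ennreal_ofReal.mul (hg.comp (measurable_circleMap_uncurry z0))
  have hdom : Ioo r1 r2 ×ˢ univ ∩ Complex.polarCoord.target = Ioo r1 r2 ×ˢ Ioo (-π) π := by
    rw [Complex.polarCoord_target, prod_inter_prod, univ_inter, Ioo_inter_Ioi, max_eq_left hr1]
  calc ∫⁻ z in annulus z0 r1 r2, g z
      = ∫⁻ w, (annulus z0 r1 r2).indicator g (z0 + w) := by
        rw [← lintegral_indicator hA, lintegral_add_left_eq_self]
    _ = ∫⁻ q in Complex.polarCoord.target, (Ioo r1 r2 ×ˢ univ).indicator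
          (fun q => ENNReal.ofReal q.1 * g (circleMap z0 q.1 q.2)) q := by
        rw [← Complex.lintegral_comp_polarCoord_symm]
        refine setLIntegral_congr_fun Complex.polarCoord.open_target.measurableSet
          fun q hq => ?_
        have hq1 : 0 ≤ q.1 := (Complex.polarCoord_target ▸ hq).1.out.le
        simp only [add_polarCoord_symm, smul_eq_mul, indicator, mem_prod, mem_univ, and_true,
          circleMap_mem_annulus_iff hq1]
        split_ifs <;> simp
    _ = ∫⁻ r in Ioo r1 r2, ∫⁻ θ in Ioo (-π) π, ENNReal.ofReal r * g (circleMap z0 r θ) := by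
        rw [setLIntegral_indicator (measurableSet_Ioo.prod MeasurableSet.univ), hdom,
          Measure.volume_eq_prod, ← Measure.prod_restrict, lintegral_prod _ hF.aemeasurable]
    _ = _ := by
        refine lintegral_congr fun r => ?_
        have hper : Function.Periodic
            (fun θ => g (circleMap z0 r θ) * ENNReal.ofReal r) (2 * π) :=
          fun θ => by simp only [periodic_circleMap z0 r θ]
        rw [setLIntegral_congr Ioo_ae_eq_Ioc, ← zero_add (2 * π),
          ← hper.setLIntegral_Ioc_add_eq two_pi_pos (-π), show -π + 2 * π = π by ring]
        simp only [mul_comm]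

section Holder

variable {α : Type*} [MeasurableSpace α] {μ : Measure α} {p : ℝ} {Φ W : α → ℝ≥0∞}

theorem inv_lintegral_rpow_rpow_le_lintegral_rpow_div (hp : 1 < p) (hΦ : AEMeasurable Φ μ)
    (hW : AEMeasurable W μ) (hW0 : ∀ x, W x ≠ 0) (hWt : ∀ x, W x ≠ ⊤)
    (h1 : 1 ≤ ∫⁻ x, Φ x ∂μ) :
    ((∫⁻ x, W x ^ (1 / (p - 1)) ∂μ) ^ (p - 1))⁻¹ ≤ ∫⁻ x, Φ x ^ p / W x ∂μ := by
  have hp0 : 0 < p := one_pos.trans hp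
  have hp1 : 0 < p - 1 := sub_pos.2 hp
  have hpq : p.HolderConjugate (p / (p - 1)) :=
    (Real.holderConjugate_iff_eq_conjExponent hp).2 rfl
  set A := ∫⁻ x, Φ x ^ p / W x ∂μ
  set B := ∫⁻ x, W x ^ (1 / (p - 1)) ∂μ
  -- Hölder for the factorization `Φ = (Φ W^{-1/p}) · W^{1/p}`
  have hHolder := ENNReal.lintegral_mul_le_Lp_mul_Lq μ hpq
    (f := fun x => Φ x * W x ^ (-(1 / p))) (g := fun x => W x ^ (1 / p))
    (hΦ.mul (hW.pow_const _)) (hW.pow_const _)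
  have hfg : ∀ x, Φ x * W x ^ (-(1 / p)) * W x ^ (1 / p) = Φ x := fun x => by
    rw [mul_assoc, ← ENNReal.rpow_add _ _ (hW0 x) (hWt x), neg_add_cancel, ENNReal.rpow_zero,
      mul_one]
  have hfp : ∀ x, (Φ x * W x ^ (-(1 / p))) ^ p = Φ x ^ p / W x := fun x => by
    rw [ENNReal.mul_rpow_of_nonneg _ _ hp0.le, ← ENNReal.rpow_mul, neg_mul,
      one_div_mul_cancel hp0.ne', ENNReal.rpow_neg_one, div_eq_mul_inv]
  have hgq : ∀ x, (W x ^ (1 / p)) ^ (p / (p - 1)) = W x ^ (1 / (p - 1)) := fun x => by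
    rw [← ENNReal.rpow_mul]
    congr 1
    field_simp
  simp only [Pi.mul_apply, hfg, hfp, hgq] at hHolder
  have hpow : 1 ≤ A * B ^ (p - 1) := by
    have := ENNReal.one_rpow p ▸ ENNReal.rpow_le_rpow (h1.trans hHolder) hp0.le
    rwa [ENNReal.mul_rpow_of_nonneg _ _ hp0.le, ← ENNReal.rpow_mul, ← ENNReal.rpow_mul,
      one_div_mul_cancel hp0.ne', ENNReal.rpow_one,
      show 1 / (p / (p - 1)) * p = p - 1 by field_simp] at this
  by_cases hBt : B = ⊤
  · simp [hBt, ENNReal.top_rpow_of_pos hp1]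
  have hB0 : B ^ (p - 1) ≠ 0 := by
    rintro h
    simp [h] at hpow
  rw [ENNReal.inv_le_iff_le_mul (fun _ => hB0)
    fun h => absurd h (ENNReal.rpow_ne_top_of_nonneg hp1.le hBt), mul_comm]
  exact hpow

theorem lintegral_rpow_div_of_holder_extremal (hp : 1 < p) (hW0 : ∀ x, W x ≠ 0)
    (hWt : ∀ x, W x ≠ ⊤) (hB0 : ∫⁻ x, W x ^ (1 / (p - 1)) ∂μ ≠ 0)
    (hBt : ∫⁻ x, W x ^ (1 / (p - 1)) ∂μ ≠ ⊤) :
    ∫⁻ x, (W x ^ (1 / (p - 1)) * (∫⁻ y, W y ^ (1 / (p - 1)) ∂μ)⁻¹) ^ p / W x ∂μ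
      = ((∫⁻ x, W x ^ (1 / (p - 1)) ∂μ) ^ (p - 1))⁻¹ := by
  have hp0 : 0 < p := one_pos.trans hp
  have hp1 : p - 1 ≠ 0 := (sub_pos.2 hp).ne'
  set B := ∫⁻ x, W x ^ (1 / (p - 1)) ∂μ
  have hpt : ∀ x, (W x ^ (1 / (p - 1)) * B⁻¹) ^ p / W x = W x ^ (1 / (p - 1)) * B⁻¹ ^ p := by
    intro x
    rw [ENNReal.mul_rpow_of_nonneg _ _ hp0.le, ← ENNReal.rpow_mul, div_eq_mul_inv,
      mul_right_comm, ← ENNReal.rpow_neg_one, ← ENNReal.rpow_add _ _ (hW0 x) (hWt x)]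
    congr 2
    field_simp
    ring
  rw [lintegral_congr hpt, lintegral_mul_const' _ _ (by simp [hB0, hp0.le])]
  change B * B⁻¹ ^ p = _
  calc B * B⁻¹ ^ p = B ^ (1 + -1 * p) := by
        rw [ENNReal.rpow_add _ _ hB0 hBt, ENNReal.rpow_one, ENNReal.rpow_mul, ENNReal.rpow_neg_one]
    _ = (B ^ (p - 1))⁻¹ := by rw [← ENNReal.rpow_neg]; ring_nf

end Holder

noncomputable def circleLengthMeasure (r : ℝ) : Measure ℝ :=
  ENNReal.ofReal r • volume.restrict (Ioc 0 (2 * π))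

theorem lintegral_circleLengthMeasure (r : ℝ) (f : ℝ → ℝ≥0∞) :
    ∫⁻ θ, f θ ∂circleLengthMeasure r = ∫⁻ θ in Ioc 0 (2 * π), f θ * ENNReal.ofReal r := by
  rw [circleLengthMeasure, lintegral_smul_measure, lintegral_mul_const' _ _ ENNReal.ofReal_ne_top,
    smul_eq_mul, mul_comm]

theorem circlePowInt_eq_lintegral (Q : ℂ → ℝ) (e : ℝ) (z0 : ℂ) (r : ℝ) :
    circlePowInt Q e z0 r
      = ∫⁻ θ, ENNReal.ofReal (Q (circleMap z0 r θ)) ^ e ∂circleLengthMeasure r :=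
  (lintegral_circleLengthMeasure r _).symm

theorem measurable_circlePowInt {Q : ℂ → ℝ} (hQ : Measurable Q) (e : ℝ) (z0 : ℂ) :
    Measurable (circlePowInt Q e z0) :=
  Measurable.lintegral_prod_right (f := fun r θ =>
    ENNReal.ofReal (Q (circleMap z0 r θ)) ^ e * ENNReal.ofReal r)
    (((hQ.comp (measurable_circleMap_uncurry z0)).ennreal_ofReal.pow_const e).mul
      measurable_fst.ennreal_ofReal)

theorem circlePowInt_ne_zero_ne_top_of_normQ {Q : ℂ → ℝ} {p : ℝ} (hp : 1 < p) {z0 : ℂ} {r : ℝ}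
    (h : 0 < normQ Q p z0 r ∧ normQ Q p z0 r < ⊤) :
    circlePowInt Q (1 / (p - 1)) z0 r ≠ 0 ∧ circlePowInt Q (1 / (p - 1)) z0 r ≠ ⊤ := by
  simpa [normQ, pos_iff_ne_zero, lt_top_iff_ne_top, ENNReal.rpow_eq_zero_iff,
    ENNReal.rpow_eq_top_iff, sub_pos.2 hp, (sub_pos.2 hp).not_gt] using h

theorem inv_normQ_le_lintegral_circle {Q : ℂ → ℝ} (hQm : Measurable Q) (hQpos : ∀ z, 0 < Q z)
    {p : ℝ} (hp : 1 < p) (z0 : ℂ) (r : ℝ) {ϱ : ℂ → ℝ≥0∞} (hϱ : Measurable ϱ)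
    (h1 : 1 ≤ ∫⁻ θ in Ioc 0 (2 * π), ϱ (circleMap z0 r θ) * ENNReal.ofReal r) :
    (normQ Q p z0 r)⁻¹ ≤ ∫⁻ θ in Ioc 0 (2 * π),
      ϱ (circleMap z0 r θ) ^ p / ENNReal.ofReal (Q (circleMap z0 r θ)) * ENNReal.ofReal r := by
  have hc : Measurable (circleMap z0 r) := (continuous_circleMap z0 r).measurable
  rw [normQ, circlePowInt_eq_lintegral, ← lintegral_circleLengthMeasure]
  rw [← lintegral_circleLengthMeasure] at h1
  exact inv_lintegral_rpow_rpow_le_lintegral_rpow_div hp (hϱ.comp hc).aemeasurable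
    (hQm.comp hc).ennreal_ofReal.aemeasurable (fun _ => (ENNReal.ofReal_pos.2 (hQpos _)).ne')
    (fun _ => ENNReal.ofReal_ne_top) h1

noncomputable def extremalDensity (Q : ℂ → ℝ) (p : ℝ) (z0 : ℂ) (z : ℂ) : ℝ≥0∞ :=
  ENNReal.ofReal (Q z) ^ (1 / (p - 1)) * (circlePowInt Q (1 / (p - 1)) z0 ‖z - z0‖)⁻¹

theorem measurable_extremalDensity {Q : ℂ → ℝ} (hQ : Measurable Q) (p : ℝ) (z0 : ℂ) :
    Measurable (extremalDensity Q p z0) :=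
  (hQ.ennreal_ofReal.pow_const _).mul
    ((measurable_circlePowInt hQ _ z0).comp (by fun_prop)).inv

theorem extremalDensity_circleMap (Q : ℂ → ℝ) (p : ℝ) (z0 : ℂ) {r : ℝ} (hr : 0 ≤ r) (θ : ℝ) :
    extremalDensity Q p z0 (circleMap z0 r θ)
      = ENNReal.ofReal (Q (circleMap z0 r θ)) ^ (1 / (p - 1))
          * (circlePowInt Q (1 / (p - 1)) z0 r)⁻¹ := by
  rw [extremalDensity, circleMap_sub_center, norm_circleMap_zero, abs_of_nonneg hr]

theorem lintegral_extremalDensity_circle (Q : ℂ → ℝ) (p : ℝ) (z0 : ℂ) {r : ℝ} (hr : 0 ≤ r)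
    (hI0 : circlePowInt Q (1 / (p - 1)) z0 r ≠ 0) (hIt : circlePowInt Q (1 / (p - 1)) z0 r ≠ ⊤) :
    ∫⁻ θ in Ioc 0 (2 * π), extremalDensity Q p z0 (circleMap z0 r θ) * ENNReal.ofReal r = 1 := by
  simp_rw [extremalDensity_circleMap Q p z0 hr, mul_right_comm _ _ (ENNReal.ofReal r)]
  rw [lintegral_mul_const' _ _ (ENNReal.inv_ne_top.2 hI0)]
  exact ENNReal.mul_inv_cancel hI0 hIt

theorem lintegral_extremalDensity_rpow_div_circle {Q : ℂ → ℝ} (hQpos : ∀ z, 0 < Q z) {p : ℝ}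
    (hp : 1 < p) (z0 : ℂ) {r : ℝ} (hr : 0 ≤ r)
    (hI0 : circlePowInt Q (1 / (p - 1)) z0 r ≠ 0) (hIt : circlePowInt Q (1 / (p - 1)) z0 r ≠ ⊤) :
    ∫⁻ θ in Ioc 0 (2 * π), extremalDensity Q p z0 (circleMap z0 r θ) ^ p
        / ENNReal.ofReal (Q (circleMap z0 r θ)) * ENNReal.ofReal r
      = (normQ Q p z0 r)⁻¹ := by
  rw [circlePowInt_eq_lintegral] at hI0 hIt
  simp_rw [extremalDensity_circleMap Q p z0 hr, ← lintegral_circleLengthMeasure,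
    circlePowInt_eq_lintegral, normQ, circlePowInt_eq_lintegral]
  exact lintegral_rpow_div_of_holder_extremal hp (fun _ => (ENNReal.ofReal_pos.2 (hQpos _)).ne')
    (fun _ => ENNReal.ofReal_ne_top) hI0 hIt

theorem stmt4_general (p : ℝ) (hp : 1 < p) (z0 : ℂ) (r1 r2 : ℝ) (hr1 : 0 < r1)
    (Q : ℂ → ℝ) (hQm : Measurable Q) (hQpos : ∀ z, 0 < Q z)
    (hQn : ∀ᵐ r ∂(volume.restrict (Set.Ioo r1 r2)),
      0 < normQ Q p z0 r ∧ normQ Q p z0 r < ⊤) :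
    (⨅ (ϱ : ℂ → ℝ≥0∞) (_ : Measurable ϱ)
        (_ : ∀ᵐ (r : ℝ) ∂(volume.restrict (Set.Ioo r1 r2)),
          1 ≤ ∫⁻ θ in Set.Ioc (0 : ℝ) (2 * π),
                ϱ (z0 + (r : ℂ) * Complex.exp ((θ : ℂ) * Complex.I))
                  * ENNReal.ofReal r),
        ∫⁻ z in annulus z0 r1 r2, ϱ z ^ p / ENNReal.ofReal (Q z) ∂volume)
      = ∫⁻ r in Set.Ioo r1 r2, (normQ Q p z0 r)⁻¹ ∂volume := by
  have hpolar (g : ℂ → ℝ≥0∞) (hg : Measurable g) :=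
    lintegral_annulus_eq_lintegral_circleMap (z0 := z0) (r2 := r2) hr1.le hg
  have hgood : ∀ᵐ r ∂(volume.restrict (Ioo r1 r2)), 0 ≤ r ∧
      circlePowInt Q (1 / (p - 1)) z0 r ≠ 0 ∧ circlePowInt Q (1 / (p - 1)) z0 r ≠ ⊤ := by
    filter_upwards [hQn, ae_restrict_mem measurableSet_Ioo] with r hr hmem
    exact ⟨hr1.le.trans hmem.1.le, circlePowInt_ne_zero_ne_top_of_normQ hp hr⟩
  have hϱ0 := measurable_extremalDensity hQm p z0
  -- `circleMap z0 r θ` unfolds to the parametrization `z0 + r * exp (θ * I)` of the statement.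
  refine le_antisymm (iInf₂_le_of_le _ hϱ0 (iInf_le_of_le ?_ ?_))
    (le_iInf₂ fun ϱ hϱ => le_iInf fun h1 => ?_)
  · filter_upwards [hgood] with r ⟨hr, hI0, hIt⟩
    exact (lintegral_extremalDensity_circle Q p z0 hr hI0 hIt).ge
  · rw [hpolar _ (by fun_prop)]
    refine (lintegral_congr_ae ?_).le
    filter_upwards [hgood] with r ⟨hr, hI0, hIt⟩
    exact lintegral_extremalDensity_rpow_div_circle hQpos hp z0 hr hI0 hIt
  · rw [hpolar _ (by fun_prop)]
    refine lintegral_mono_ae ?_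
    filter_upwards [h1] with r hr
    exact inv_normQ_le_lintegral_circle hQm hQpos hp z0 r hϱ hr

/-- For `p > 1`, `0 < r₁ < r₂` and measurable `Q : ℂ → (0,∞)` with
`0 < ‖Q‖_{1/(p-1)}(z₀,r) < ∞` for a.e. `r ∈ (r₁,r₂)`, the infimum of
`∫_{R(z₀,r₁,r₂)} ϱ^p/Q dm` over all measurable `ϱ : ℂ → [0,∞]` whose arclength
integral over the circle `|z-z₀| = r` is at least `1` for a.e. `r ∈ (r₁,r₂)` equals
`∫_{r₁}^{r₂} dr / ‖Q‖_{1/(p-1)}(z₀,r)`. -/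
theorem stmt4 (p : ℝ) (hp : 1 < p) (z0 : ℂ) (r1 r2 : ℝ) (hr1 : 0 < r1) (hr12 : r1 < r2)
    (Q : ℂ → ℝ) (hQm : Measurable Q) (hQpos : ∀ z, 0 < Q z)
    (hQn : ∀ᵐ r ∂(volume.restrict (Set.Ioo r1 r2)),
      0 < normQ Q p z0 r ∧ normQ Q p z0 r < ⊤) :
    (⨅ (ϱ : ℂ → ℝ≥0∞) (_ : Measurable ϱ)
        (_ : ∀ᵐ (r : ℝ) ∂(volume.restrict (Set.Ioo r1 r2)),
          1 ≤ ∫⁻ θ in Set.Ioc (0 : ℝ) (2 * π),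
                ϱ (z0 + (r : ℂ) * Complex.exp ((θ : ℂ) * Complex.I))
                  * ENNReal.ofReal r),
        ∫⁻ z in annulus z0 r1 r2, ϱ z ^ p / ENNReal.ofReal (Q z) ∂volume)
      = ∫⁻ r in Set.Ioo r1 r2, (normQ Q p z0 r)⁻¹ ∂volume :=
  stmt4_general p hp z0 r1 r2 hr1 Q hQm hQpos hQn
end

section
/- Let $f : \mathbb{C} \to \mathbb{C}$ be a homeomorphism of $\mathbb{C}$ onto $\mathbb{C}$ with $f(0) = 0$, and let $\mathcal{R} : (0,1) \to (0,\infty)$ be a function such that for every $r \in (0,1)$, $$m\big(f(B_r)\big) \le \pi\, \mathcal{R}(r)^2,$$ where $B_r = \{z \in \mathbb{C} : |z| < r\}$ and $m$ is two-dimensional Lebesgue measure on $\mathbb{C}$. Then $$\liminf_{z \to 0} \frac{|f(z)|}{\mathcal{R}(|z|)} \le 1.$$ -/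
open MeasureTheory Filter Real

/-!
Suppose the liminf exceeds `a > 1`. Then `‖f z‖ ≥ a R(r)` on every small sphere `|z| = r`.
Since `f` is a homeomorphism, the boundary of the open set `f(B_r) ∋ 0` is `f(∂B_r)`, so the
connected disk of radius `a R(r)` cannot leave `f(B_r)`. Comparing areas gives
`π a² R(r)² ≤ m(f(B_r)) ≤ π R(r)²`, contradicting `a > 1`.
-/

open Metric Set Topology

theorem IsHomeomorph.ball_subset_image_ball {E F : Type*} [NormedAddCommGroup E]
    [NormedSpace ℝ E] [NormedAddCommGroup F] [NormedSpace ℝ F] {f : E → F}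
    (hf : IsHomeomorph f) {x : E} {r ρ : ℝ} (hr : 0 < r)
    (hsphere : ∀ z ∈ sphere x r, ρ ≤ dist (f z) (f x)) :
    ball (f x) ρ ⊆ f '' ball x r := by
  rcases le_or_gt ρ 0 with hρ | hρ
  · simp [ball_eq_empty.2 hρ]
  refine (convex_ball (f x) ρ).isPreconnected.subset_of_closure_inter_subset
    (hf.isOpenMap _ isOpen_ball) ⟨f x, mem_ball_self hρ, x, mem_ball_self hr, rfl⟩ ?_
  rintro _ ⟨hclosure, hw⟩
  rw [← hf.image_closure, closure_ball x hr.ne'] at hclosure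
  obtain ⟨z, hz, rfl⟩ := hclosure
  refine ⟨z, (mem_closedBall.1 hz).lt_of_ne fun hzr => ?_, rfl⟩
  exact (hsphere z hzr).not_gt (mem_ball.1 hw)

theorem Complex.le_of_volume_ball_le {x : ℂ} {ρ R : ℝ} (hR : 0 ≤ R)
    (hvol : volume (ball x ρ) ≤ ENNReal.ofReal (π * R ^ 2)) : ρ ≤ R := by
  by_contra! hRρ
  have hπR : π * R ^ 2 < π * ρ ^ 2 := by gcongr
  rw [Complex.volume_ball, ← ENNReal.ofReal_pow (hR.trans hRρ.le), ← ENNReal.ofReal_coe_nnreal,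
    ← ENNReal.ofReal_mul (by positivity), NNReal.coe_real_pi, mul_comm,
    ENNReal.ofReal_le_ofReal_iff (by positivity)] at hvol
  exact hvol.not_gt hπR

theorem eventually_forall_sphere_of_eventually_nhdsNE {E : Type*} [NormedAddCommGroup E]
    {P : E → Prop} (h : ∀ᶠ z in 𝓝[≠] 0, P z) : ∀ᶠ r in 𝓝[>] 0, ∀ z ∈ sphere (0 : E) r, P z := by
  obtain ⟨ε, hε, hball⟩ := Metric.mem_nhdsWithin_iff.1 h
  filter_upwards [Ioo_mem_nhdsGT hε] with r hr z hz
  rw [mem_sphere_zero_iff_norm] at hz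
  exact hball ⟨mem_ball_zero_iff.2 (hz ▸ hr.2), norm_ne_zero_iff.1 (hz ▸ hr.1.ne')⟩

/-- Let `f : ℂ → ℂ` be a homeomorphism of `ℂ` onto `ℂ` with `f(0) = 0`,
and let `R : (0,1) → (0,∞)` satisfy `m(f(B_r)) ≤ π R(r)²` for all `r ∈ (0,1)`,
where `B_r` is the open disk of radius `r` about the origin and `m` is the
two-dimensional Lebesgue measure on `ℂ`. Then `liminf_{z → 0} |f(z)|/R(|z|) ≤ 1`. -/
theorem stmt8 (f : ℂ → ℂ) (hf : IsHomeomorph f) (hf0 : f 0 = 0)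
    (R : ℝ → ℝ) (hRpos : ∀ r ∈ Set.Ioo (0 : ℝ) 1, 0 < R r)
    (hbound : ∀ r ∈ Set.Ioo (0 : ℝ) 1,
      volume (f '' Metric.ball (0 : ℂ) r) ≤ ENNReal.ofReal (π * R r ^ 2)) :
    Filter.liminf (fun z : ℂ => ‖f z‖ / R ‖z‖)
      (nhdsWithin 0 {(0 : ℂ)}ᶜ) ≤ 1 := by
  by_contra! hlt
  have hsmall : ∀ᶠ z : ℂ in 𝓝[≠] 0, ‖z‖ ∈ Ioo (0 : ℝ) 1 :=
    tendsto_norm_nhdsNE_zero.eventually (Ioo_mem_nhdsGT one_pos)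
  have hbdd : IsBoundedUnder (· ≥ ·) (𝓝[≠] 0) fun z : ℂ => ‖f z‖ / R ‖z‖ :=
    isBoundedUnder_of_eventually_ge <| hsmall.mono fun z hz =>
      div_nonneg (norm_nonneg _) (hRpos _ hz).le
  obtain ⟨a, ha, haL⟩ := exists_between hlt
  have hfar : ∀ᶠ z : ℂ in 𝓝[≠] 0, a * R ‖z‖ ≤ ‖f z‖ :=
    ((eventually_lt_of_lt_liminf haL hbdd).and hsmall).mono fun z ⟨hz, hzr⟩ =>
      ((lt_div_iff₀ (hRpos _ hzr)).1 hz).le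
  obtain ⟨r, hsphere, hr⟩ :=
    ((eventually_forall_sphere_of_eventually_nhdsNE hfar).and (Ioo_mem_nhdsGT one_pos)).exists
  have hball : ball 0 (a * R r) ⊆ f '' ball 0 r := by
    have := hf.ball_subset_image_ball (x := 0) (ρ := a * R r) hr.1 fun z hz => by
      simpa [hf0, mem_sphere_zero_iff_norm.1 hz] using hsphere z hz
    rwa [hf0] at this
  have haR : a * R r ≤ R r :=
    Complex.le_of_volume_ball_le (hRpos r hr).le ((measure_mono hball).trans (hbound r hr))
  exact haR.not_gt ((lt_mul_iff_one_lt_left (hRpos r hr)).2 ha)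
end

section
/- Let $p > 2$, let $Q : \mathbb{C} \to (0,\infty)$ be measurable, let $\mathbb{B} = \{z \in \mathbb{C} : |z| < 1\}$, and let $f : \mathbb{B} \to \mathbb{B}$ be a homeomorphism of $\mathbb{B}$ onto $\mathbb{B}$ with $f(0) = 0$. Suppose that for every $r \in (0,1)$ $$m\big(f(B_r)\big) \le \pi \Big( 1 + (2\pi)^{p-1}(p-2) \int_r^1 \frac{dt}{\|Q\|_{1/(p-1)}(0,t)} \Big)^{\frac{2}{2-p}},$$ where $B_r = \{z \in \mathbb{C} : |z| < r\}$. Then $$\liminf_{z \to 0} |f(z)| \cdot \Big( 1 + (2\pi)^{p-1}(p-2) \int_{|z|}^1 \frac{dt}{\|Q\|_{1/(p-1)}(0,t)} \Big)^{\frac{1}{p-2}} \le 1.$$ -/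
/-!
Write `g(r) = (1 + (2π)^{p-1}(p-2) ∫_r^1 dt/‖Q‖(0,t))^{1/(p-2)}`, so that the hypothesis reads
`m(f(B_r)) ≤ π g(r)⁻²`. Since `f` is a homeomorphism fixing `0`, the open set `f(B_r)` contains
the disk of radius `ρ = min_{|z| = r} |f z|`: that disk is connected, meets `f(B_r)` at `0`, and
misses the boundary of `f(B_r)`, which lies in the image of the circle `|z| = r`. Comparing areas,
`ρ ≤ g(r)⁻¹`, so on every small circle there is a point with `|f z| g(|z|) ≤ 1`.
-/

open MeasureTheory ENNReal Real Filter

open Topology Metric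

theorem Homeomorph.continuousOn_of_val_eq {X Y : Type*} [TopologicalSpace X] [TopologicalSpace Y]
    {U : Set X} {V : Set Y} (F : U ≃ₜ V) {f : X → Y} (hfF : ∀ z : U, f z = F z) :
    ContinuousOn f U := by
  rw [continuousOn_iff_continuous_domRestrict]
  convert continuous_subtype_val.comp F.continuous using 1
  exact funext hfF

theorem Homeomorph.isOpen_image_of_val_eq {X Y : Type*} [TopologicalSpace X] [TopologicalSpace Y]
    {U : Set X} {V : Set Y} (hV : IsOpen V) (F : U ≃ₜ V) {f : X → Y}
    (hfF : ∀ z : U, f z = F z) {s : Set X} (hs : IsOpen s) (hsU : s ⊆ U) :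
    IsOpen (f '' s) := by
  have himage : f '' s = (Subtype.val ∘ F) '' (Subtype.val ⁻¹' s) := by
    rw [show Subtype.val ∘ F = f ∘ Subtype.val from funext fun z => (hfF z).symm, Set.image_comp,
      Subtype.image_preimage_coe, Set.inter_eq_right.2 hsU]
  rw [himage]
  exact (hV.isOpenMap_subtype_val.comp F.isOpenMap) _ (hs.preimage continuous_subtype_val)

section ImageOfBall

variable {E : Type*} [NormedAddCommGroup E] [NormedSpace ℝ E] [ProperSpace E] {f : E → E} {r : ℝ}

theorem ball_subset_image_ball_of_le_norm_on_sphere (hcont : ContinuousOn f (closedBall 0 r))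
    (hopen : IsOpen (f '' ball 0 r)) (hf0 : f 0 = 0) (hr : 0 < r) {x : ℝ} (hx : 0 < x)
    (hsphere : ∀ z ∈ sphere (0 : E) r, x ≤ ‖f z‖) :
    ball 0 x ⊆ f '' ball 0 r := by
  refine (convex_ball (0 : E) x).isPreconnected.subset_of_closure_inter_subset hopen
    ⟨0, mem_ball_self hx, 0, mem_ball_self hr, hf0⟩ ?_
  have hclosure : closure (f '' ball 0 r) ⊆ f '' closedBall 0 r :=
    closure_minimal (Set.image_mono ball_subset_closedBall)
      ((isCompact_closedBall 0 r).image_of_continuousOn hcont).isClosed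
  rintro _ ⟨hw, hwx⟩
  obtain ⟨z, hz, rfl⟩ := hclosure hw
  rcases (mem_closedBall_zero_iff.1 hz).lt_or_eq with hzr | hzr
  · exact ⟨z, mem_ball_zero_iff.2 hzr, rfl⟩
  · exact absurd (hsphere z (mem_sphere_zero_iff_norm.2 hzr)) (not_le.2 (mem_ball_zero_iff.1 hwx))

end ImageOfBall

theorem exists_mem_sphere_norm_le_of_volume_image_ball_le {f : ℂ → ℂ} {r : ℝ}
    (hcont : ContinuousOn f (closedBall 0 r)) (hopen : IsOpen (f '' ball 0 r)) (hf0 : f 0 = 0)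
    (hr : 0 < r) {a : ℝ≥0∞} (hvol : volume (f '' ball 0 r) ≤ ENNReal.ofReal π * a ^ 2) :
    ∃ z ∈ sphere (0 : ℂ) r, ENNReal.ofReal ‖f z‖ ≤ a := by
  by_contra! hlarge
  obtain ⟨z₀, hz₀, hmin⟩ := (isCompact_sphere (0 : ℂ) r).exists_isMinOn
    (NormedSpace.sphere_nonempty.2 hr.le)
    (continuous_norm.comp_continuousOn (hcont.mono sphere_subset_closedBall))
  have hρ : 0 < ‖f z₀‖ := ENNReal.ofReal_pos.1 (pos_of_gt (hlarge z₀ hz₀))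
  have hball := ball_subset_image_ball_of_le_norm_on_sphere hcont hopen hf0 hr hρ
    fun z hz => isMinOn_iff.1 hmin z hz
  have hsq : ENNReal.ofReal ‖f z₀‖ ^ 2 ≤ a ^ 2 := by
    have h := (measure_mono hball).trans hvol
    rwa [Complex.volume_ball, ← ENNReal.ofReal_coe_nnreal, NNReal.coe_real_pi, mul_comm,
      ENNReal.mul_le_mul_iff_right (by simpa using pi_pos) ofReal_ne_top] at h
  exact (hlarge z₀ hz₀).not_ge ((ENNReal.pow_le_pow_left_iff two_ne_zero).1 hsq)

theorem frequently_nhdsNE_zero_of_forall_exists_mem_sphere {P : ℂ → Prop}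
    (h : ∀ r ∈ Set.Ioo (0 : ℝ) 1, ∃ z ∈ sphere (0 : ℂ) r, P z) : ∃ᶠ z in 𝓝[≠] 0, P z := by
  rw [Filter.frequently_iff]
  intro U hU
  obtain ⟨ε, hε, hεU⟩ := mem_nhdsWithin_iff.1 hU
  have hr : min ε 1 / 2 ∈ Set.Ioo (0 : ℝ) 1 :=
    ⟨by positivity, by linarith [min_le_right ε 1]⟩
  obtain ⟨z, hz, hPz⟩ := h _ hr
  have hzε : ‖z‖ < ε := by
    rw [mem_sphere_zero_iff_norm.1 hz]
    linarith [min_le_left ε 1, hr.1]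
  have hz0 : z ≠ 0 := ne_zero_of_mem_sphere hr.1.ne' ⟨z, hz⟩
  exact ⟨z, hεU ⟨mem_ball_zero_iff.2 hzε, hz0⟩, hPz⟩

theorem ENNReal.rpow_two_div_two_sub (A : ℝ≥0∞) (p : ℝ) :
    A ^ (2 / (2 - p)) = ((A ^ (1 / (p - 2)))⁻¹) ^ 2 := by
  have hexp : (2 : ℝ) / (2 - p) = 1 / (p - 2) * -((2 : ℕ) : ℝ) := by
    rw [show (2 : ℝ) - p = -(p - 2) by ring, div_neg]
    push_cast
    ring
  rw [hexp, ENNReal.rpow_mul, ENNReal.rpow_neg, ENNReal.rpow_natCast, ENNReal.inv_pow]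

theorem stmt12_general (p : ℝ)
    (Q : ℂ → ℝ)
    (f : ℂ → ℂ) (F : Metric.ball (0 : ℂ) 1 ≃ₜ Metric.ball (0 : ℂ) 1)
    (hfF : ∀ z : Metric.ball (0 : ℂ) 1, f z = (F z : ℂ))
    (hf0 : f 0 = 0)
    (hbound : ∀ r ∈ Set.Ioo (0 : ℝ) 1,
      volume (f '' Metric.ball (0 : ℂ) r)
        ≤ ENNReal.ofReal π
          * (1 + ENNReal.ofReal ((2 * π) ^ (p - 1) * (p - 2))
              * ∫⁻ t in Set.Ioo r 1, (normQ Q p 0 t)⁻¹ ∂volume) ^ (2 / (2 - p))) :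
    Filter.liminf
      (fun z : ℂ => ENNReal.ofReal ‖f z‖
        * (1 + ENNReal.ofReal ((2 * π) ^ (p - 1) * (p - 2))
            * ∫⁻ t in Set.Ioo ‖z‖ 1, (normQ Q p 0 t)⁻¹ ∂volume)
          ^ (1 / (p - 2)))
      (nhdsWithin 0 {(0 : ℂ)}ᶜ) ≤ 1 := by
  set g : ℝ → ℝ≥0∞ := fun r => (1 + ENNReal.ofReal ((2 * π) ^ (p - 1) * (p - 2))
      * ∫⁻ t in Set.Ioo r 1, (normQ Q p 0 t)⁻¹ ∂volume) ^ (1 / (p - 2))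
  have hcont := F.continuousOn_of_val_eq hfF
  refine liminf_le_of_frequently_le (frequently_nhdsNE_zero_of_forall_exists_mem_sphere ?_)
  intro r hr
  have hclosed : closedBall (0 : ℂ) r ⊆ ball 0 1 := closedBall_subset_ball hr.2
  have hvol : volume (f '' ball 0 r) ≤ ENNReal.ofReal π * (g r)⁻¹ ^ 2 := by
    simpa only [g, ← ENNReal.rpow_two_div_two_sub] using hbound r hr
  obtain ⟨z, hz, hfz⟩ := exists_mem_sphere_norm_le_of_volume_image_ball_le
    (hcont.mono hclosed) (F.isOpen_image_of_val_eq isOpen_ball hfF isOpen_ball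
      (ball_subset_closedBall.trans hclosed)) hf0 hr.1 hvol
  refine ⟨z, hz, ?_⟩
  rw [mem_sphere_zero_iff_norm.1 hz]
  exact (mul_le_mul_left hfz (g r)).trans (ENNReal.inv_mul_le_one (g r))

/-- Let `p > 2`, `Q : ℂ → (0,∞)` measurable, and let `f` be a
homeomorphism of the unit disk `𝔹` onto itself with `f(0) = 0` (encoded by a
homeomorphism `F` of the subtype with which `f` agrees on `𝔹`). If for every
`r ∈ (0,1)` one has
`m(f(B_r)) ≤ π (1 + (2π)^{p-1}(p-2) ∫_r^1 dt/‖Q‖_{1/(p-1)}(0,t))^{2/(2-p)}`,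
then `liminf_{z→0} |f(z)| (1 + (2π)^{p-1}(p-2) ∫_{|z|}^1 dt/‖Q‖_{1/(p-1)}(0,t))^{1/(p-2)} ≤ 1`. -/
theorem stmt12 (p : ℝ) (hp : 2 < p)
    (Q : ℂ → ℝ) (hQm : Measurable Q) (hQpos : ∀ z, 0 < Q z)
    (f : ℂ → ℂ) (F : Metric.ball (0 : ℂ) 1 ≃ₜ Metric.ball (0 : ℂ) 1)
    (hfF : ∀ z : Metric.ball (0 : ℂ) 1, f z = (F z : ℂ))
    (hf0 : f 0 = 0)
    (hbound : ∀ r ∈ Set.Ioo (0 : ℝ) 1,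
      volume (f '' Metric.ball (0 : ℂ) r)
        ≤ ENNReal.ofReal π
          * (1 + ENNReal.ofReal ((2 * π) ^ (p - 1) * (p - 2))
              * ∫⁻ t in Set.Ioo r 1, (normQ Q p 0 t)⁻¹ ∂volume) ^ (2 / (2 - p))) :
    Filter.liminf
      (fun z : ℂ => ENNReal.ofReal ‖f z‖
        * (1 + ENNReal.ofReal ((2 * π) ^ (p - 1) * (p - 2))
            * ∫⁻ t in Set.Ioo ‖z‖ 1, (normQ Q p 0 t)⁻¹ ∂volume)
          ^ (1 / (p - 2)))
      (nhdsWithin 0 {(0 : ℂ)}ᶜ) ≤ 1 :=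
  stmt12_general p Q f F hfF hf0 hbound
end

section
/- Let $Q : \mathbb{C} \to (0,\infty)$ be measurable, let $\mathbb{B} = \{z \in \mathbb{C} : |z| < 1\}$, and let $f : \mathbb{B} \to \mathbb{B}$ be a homeomorphism of $\mathbb{B}$ onto $\mathbb{B}$ with $f(0) = 0$. Suppose that for every $r \in (0,1)$ $$m\big(f(B_r)\big) \le \pi \exp\Big\{ -4\pi \int_r^1 \frac{dt}{\|Q\|_1(0,t)} \Big\},$$ where $B_r = \{z \in \mathbb{C} : |z| < r\}$ and $\|Q\|_1(0,t) = \int_0^{2\pi} Q(te^{i\theta})\, t\, d\theta$ is the arclength integral of $Q$ over the circle $|z| = t$. Then $$\liminf_{z \to 0} |f(z)| \cdot \exp\Big\{ 2\pi \int_{|z|}^1 \frac{dt}{\|Q\|_1(0,t)} \Big\} \le 1.$$ -/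
open MeasureTheory ENNReal Real Filter

/-- The exponential function extended to `[0,∞]`, with `expE ∞ = ∞`. -/
noncomputable def expE (x : ℝ≥0∞) : ℝ≥0∞ :=
  if x = ⊤ then ⊤ else ENNReal.ofReal (Real.exp x.toReal)

open Topology Metric

/-!
Let `I(r) = ∫_r^1 dt/‖Q‖₁(0,t)`. For `0 < r < 1`, let `z₀` minimise `|f|` on the circle
`|z| = r` and put `d = |f(z₀)|`. Since `f` is a homeomorphism of the disk fixing `0`, the
connected disk `B_d` is covered by the disjoint open sets `f(B_r)` and `f(𝔹 \ B̄_r)` and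
meets the first one, so `B_d ⊆ f(B_r)`. The area hypothesis then gives
`π d² ≤ π exp(-4π I(r))`, i.e. `d · exp(2π I(r)) ≤ 1`, at points `z₀` of every small circle.
-/

section Homeomorph

variable {X : Type*} [TopologicalSpace X] {U : Set X} (F : U ≃ₜ U) {f : X → X}

theorem image_eq_image_val_of_homeomorph (hfF : ∀ z : U, f z = F z) {S : Set X}
    (hSU : S ⊆ U) : f '' S = (↑) '' (F '' ((↑) ⁻¹' S)) := by
  ext w
  constructor
  · rintro ⟨z, hz, rfl⟩
    exact ⟨F ⟨z, hSU hz⟩, ⟨⟨z, hSU hz⟩, hz, rfl⟩, (hfF ⟨z, hSU hz⟩).symm⟩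
  · rintro ⟨_, ⟨q, hq, rfl⟩, rfl⟩
    exact ⟨q, hq, hfF q⟩

theorem image_self_of_homeomorph (hfF : ∀ z : U, f z = F z) : f '' U = U := by
  rw [image_eq_image_val_of_homeomorph F hfF subset_rfl, Subtype.coe_preimage_self,
    Set.image_univ, F.range_coe, Set.image_univ, Subtype.range_coe]

theorem injOn_of_homeomorph (hfF : ∀ z : U, f z = F z) : Set.InjOn f U := by
  intro z hz w hw h
  rw [hfF ⟨z, hz⟩, hfF ⟨w, hw⟩] at h
  exact congrArg Subtype.val (F.injective (Subtype.ext h))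

theorem continuousOn_of_homeomorph (hfF : ∀ z : U, f z = F z) : ContinuousOn f U := by
  rw [continuousOn_iff_continuous_domRestrict,
    show U.domRestrict f = fun z => (F z : X) from funext hfF]
  fun_prop

theorem isOpen_image_of_homeomorph (hfF : ∀ z : U, f z = F z) (hU : IsOpen U) {S : Set X}
    (hS : IsOpen S) (hSU : S ⊆ U) : IsOpen (f '' S) := by
  rw [image_eq_image_val_of_homeomorph F hfF hSU]
  exact hU.isOpenMap_subtype_val _ (F.isOpenMap _ (hS.preimage continuous_subtype_val))

end Homeomorph

section UnitBall

variable {E : Type*} [NormedAddCommGroup E] [NormedSpace ℝ E]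
  (F : ball (0 : E) 1 ≃ₜ ball (0 : E) 1) {f : E → E}

theorem ball_norm_subset_image_ball_of_isMinOn (hfF : ∀ z : ball (0 : E) 1, f z = F z)
    (hf0 : f 0 = 0) {r : ℝ} (hr0 : 0 < r) (hr1 : r < 1) {z₀ : E} (hz₀ : z₀ ∈ sphere 0 r)
    (hmin : IsMinOn (‖f ·‖) (sphere 0 r) z₀) :
    ball 0 ‖f z₀‖ ⊆ f '' ball 0 r := by
  have hball : ball (0 : E) r ⊆ ball 0 1 := ball_subset_ball hr1.le
  have houter : ball (0 : E) 1 \ closedBall 0 r ⊆ ball 0 1 := Set.sdiff_subset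
  have hd1 : ball (0 : E) ‖f z₀‖ ⊆ ball 0 1 := by
    have : f z₀ ∈ ball (0 : E) 1 := by
      rw [← image_self_of_homeomorph F hfF]
      exact Set.mem_image_of_mem f (closedBall_subset_ball hr1 (sphere_subset_closedBall hz₀))
    exact ball_subset_ball (by simpa using this.out.le)
  have hcover : ball (0 : E) ‖f z₀‖ ⊆ f '' ball 0 r ∪ f '' (ball 0 1 \ closedBall 0 r) := by
    intro w hw
    obtain ⟨z, hz, rfl⟩ := (image_self_of_homeomorph F hfF).symm ▸ hd1 hw
    have hzr : ‖z‖ ≠ r := fun hzr =>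
      (hmin (mem_sphere_zero_iff_norm.2 hzr)).not_gt (mem_ball_zero_iff.1 hw)
    rcases hzr.lt_or_gt with h | h
    · exact Or.inl ⟨z, mem_ball_zero_iff.2 h, rfl⟩
    · exact Or.inr ⟨z, ⟨hz, by simpa using h⟩, rfl⟩
  have hdisj : Disjoint (f '' ball 0 r) (f '' (ball 0 1 \ closedBall 0 r)) := by
    refine Disjoint.image ?_ (injOn_of_homeomorph F hfF) hball houter
    exact Set.disjoint_sdiff_right.mono_right (Set.sdiff_subset_sdiff_right ball_subset_closedBall)
  rcases le_or_gt ‖f z₀‖ 0 with hd0 | hd0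
  · simp [ball_eq_empty.2 hd0]
  exact (convex_ball (0 : E) _).isPreconnected.subset_left_of_subset_union
    (isOpen_image_of_homeomorph F hfF isOpen_ball isOpen_ball hball)
    (isOpen_image_of_homeomorph F hfF isOpen_ball (isOpen_ball.sdiff isClosed_closedBall) houter)
    hdisj hcover ⟨0, mem_ball_self hd0, 0, mem_ball_self hr0, hf0⟩

end UnitBall

theorem expE_two_mul (A : ℝ≥0∞) : expE (2 * A) = expE A ^ 2 := by
  rcases eq_or_ne A ⊤ with rfl | hA
  · simp [expE]
  · have h2A : 2 * A ≠ ⊤ := by finiteness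
    rw [expE, expE, if_neg h2A, if_neg hA, ← ofReal_pow (Real.exp_pos _).le, ← Real.exp_nat_mul,
      toReal_mul]
    norm_num

theorem mul_expE_le_one_of_sq_mul_pi_le {x A : ℝ≥0∞}
    (h : x ^ 2 * ENNReal.ofReal π ≤ ENNReal.ofReal π * (expE (2 * A))⁻¹) :
    x * expE A ≤ 1 := by
  rw [mul_comm, ENNReal.mul_le_mul_iff_right (by simp [Real.pi_pos]) ofReal_ne_top, expE_two_mul,
    le_inv_iff_mul_le, ← mul_pow] at h
  exact (pow_le_one_iff two_ne_zero).1 h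

theorem liminf_nhdsNE_le_of_forall_exists_norm_eq {E : Type*} [SeminormedAddCommGroup E]
    {g : E → ℝ≥0∞} {c : ℝ≥0∞} (h : ∀ r ∈ Set.Ioo (0 : ℝ) 1, ∃ z, ‖z‖ = r ∧ g z ≤ c) :
    liminf g (𝓝[≠] 0) ≤ c := by
  refine liminf_le_of_frequently_le' (nhdsWithin_basis_ball.frequently_iff.2 fun ε hε => ?_)
  obtain ⟨z, hz, hgz⟩ :=
    h (min (ε / 2) (1 / 2)) ⟨by positivity, (min_le_right _ _).trans_lt (by norm_num)⟩
  refine ⟨z, ⟨mem_ball_zero_iff.2 ?_, ?_⟩, hgz⟩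
  · rw [hz]; exact (min_le_left _ _).trans_lt (half_lt_self hε)
  · exact ne_zero_of_norm_ne_zero (hz ▸ by positivity)

theorem exists_norm_eq_mul_expE_le_one_of_volume_image_le
    (F : ball (0 : ℂ) 1 ≃ₜ ball (0 : ℂ) 1) {f : ℂ → ℂ} (hfF : ∀ z : ball (0 : ℂ) 1, f z = F z)
    (hf0 : f 0 = 0) {r : ℝ} (hr0 : 0 < r) (hr1 : r < 1) {A : ℝ≥0∞}
    (hvol : volume (f '' ball 0 r) ≤ ENNReal.ofReal π * (expE (2 * A))⁻¹) :
    ∃ z : ℂ, ‖z‖ = r ∧ ENNReal.ofReal ‖f z‖ * expE A ≤ 1 := by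
  have hsphere : sphere (0 : ℂ) r ⊆ ball 0 1 := sphere_subset_closedBall.trans
    (closedBall_subset_ball hr1)
  obtain ⟨z₀, hz₀, hmin⟩ := (isCompact_sphere (0 : ℂ) r).exists_isMinOn
    (NormedSpace.sphere_nonempty.2 hr0.le)
    (continuous_norm.comp_continuousOn ((continuousOn_of_homeomorph F hfF).mono hsphere))
  refine ⟨z₀, mem_sphere_zero_iff_norm.1 hz₀, mul_expE_le_one_of_sq_mul_pi_le ?_⟩
  calc ENNReal.ofReal ‖f z₀‖ ^ 2 * ENNReal.ofReal π
      = volume (ball (0 : ℂ) ‖f z₀‖) := by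
        rw [Complex.volume_ball, ← NNReal.coe_real_pi, ofReal_coe_nnreal]
    _ ≤ volume (f '' ball 0 r) :=
        measure_mono (ball_norm_subset_image_ball_of_isMinOn F hfF hf0 hr0 hr1 hz₀ hmin)
    _ ≤ _ := hvol

theorem stmt13_general (Q : ℂ → ℝ)
    (f : ℂ → ℂ) (F : Metric.ball (0 : ℂ) 1 ≃ₜ Metric.ball (0 : ℂ) 1)
    (hfF : ∀ z : Metric.ball (0 : ℂ) 1, f z = (F z : ℂ))
    (hf0 : f 0 = 0)
    (hbound : ∀ r ∈ Set.Ioo (0 : ℝ) 1,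
      volume (f '' Metric.ball (0 : ℂ) r)
        ≤ ENNReal.ofReal π
          * (expE (ENNReal.ofReal (4 * π)
              * ∫⁻ t in Set.Ioo r 1, (circlePowInt Q 1 0 t)⁻¹ ∂volume))⁻¹) :
    Filter.liminf
      (fun z : ℂ => ENNReal.ofReal ‖f z‖
        * expE (ENNReal.ofReal (2 * π)
            * ∫⁻ t in Set.Ioo ‖z‖ 1, (circlePowInt Q 1 0 t)⁻¹ ∂volume))
      (nhdsWithin 0 {(0 : ℂ)}ᶜ) ≤ 1 := by
  have h4π : ENNReal.ofReal (4 * π) = 2 * ENNReal.ofReal (2 * π) := by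
    rw [show (4 : ℝ) * π = 2 * (2 * π) by ring, ENNReal.ofReal_mul zero_le_two,
      ENNReal.ofReal_ofNat]
  refine liminf_nhdsNE_le_of_forall_exists_norm_eq fun r ⟨hr0, hr1⟩ => ?_
  obtain ⟨z, hz, hle⟩ := exists_norm_eq_mul_expE_le_one_of_volume_image_le F hfF hf0 hr0 hr1
    (by simpa only [h4π, mul_assoc] using hbound r ⟨hr0, hr1⟩)
  exact ⟨z, hz, hz ▸ hle⟩

/-- Let `Q : ℂ → (0,∞)` be measurable and let `f` be a homeomorphism of
the unit disk `𝔹` onto itself with `f(0) = 0` (encoded by a homeomorphism `F` of the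
subtype with which `f` agrees on `𝔹`). If for every `r ∈ (0,1)` one has
`m(f(B_r)) ≤ π exp{-4π ∫_r^1 dt/‖Q‖₁(0,t)}` (the right-hand side written as
`π · (expE(4π ∫ …))⁻¹`, which is the correct value `0` when the integral is infinite),
then `liminf_{z→0} |f(z)| · exp{2π ∫_{|z|}^1 dt/‖Q‖₁(0,t)} ≤ 1`. -/
theorem stmt13 (Q : ℂ → ℝ) (hQm : Measurable Q) (hQpos : ∀ z, 0 < Q z)
    (f : ℂ → ℂ) (F : Metric.ball (0 : ℂ) 1 ≃ₜ Metric.ball (0 : ℂ) 1)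
    (hfF : ∀ z : Metric.ball (0 : ℂ) 1, f z = (F z : ℂ))
    (hf0 : f 0 = 0)
    (hbound : ∀ r ∈ Set.Ioo (0 : ℝ) 1,
      volume (f '' Metric.ball (0 : ℂ) r)
        ≤ ENNReal.ofReal π
          * (expE (ENNReal.ofReal (4 * π)
              * ∫⁻ t in Set.Ioo r 1, (circlePowInt Q 1 0 t)⁻¹ ∂volume))⁻¹) :
    Filter.liminf
      (fun z : ℂ => ENNReal.ofReal ‖f z‖
        * expE (ENNReal.ofReal (2 * π)
            * ∫⁻ t in Set.Ioo ‖z‖ 1, (circlePowInt Q 1 0 t)⁻¹ ∂volume))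
      (nhdsWithin 0 {(0 : ℂ)}ᶜ) ≤ 1 :=
  stmt13_general Q f F hfF hf0 hbound
end
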